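/- For positive semidefinite matrices a, b ∈ Mₙ(ℂ), the following are equivalent: (1) λ_i(a) ≤ λ_i(b) for all i = 1,...,n (eigenvalues in decreasing order); (2) there exists a contraction c ∈ Mₙ(ℂ) (i.e., ‖c‖ ≤ 1 in operator norm) such that a = c b c*. -/

import Mathlib

open Matrix BigOperators Finset
open scoped ComplexOrder

/-- The `i`-th largest eigenvalue (0-indexed) of a Hermitian matrix. -/
noncomputable def eigDesc {n : ℕ} (a : Matrix (Fin n) (Fin n) ℂ) (ha : a.IsHermitian) (i : Fin n) : ℝ :=
  ha.eigenvalues (Tuple.sort ha.eigenvalues i.rev)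

/-- Eigenvalues in decreasing order, extended by `0` beyond the size. `eigN a ha i = λ_{i+1}(a)`. -/
noncomputable def eigN {n : ℕ} (a : Matrix (Fin n) (Fin n) ℂ) (ha : a.IsHermitian) (i : ℕ) : ℝ :=
  if h : i < n then eigDesc a ha ⟨i, h⟩ else 0

/-- The non-linear trace of Choquet type:
`φ_α(a) = ∑_{i=1}^{n-1} (λ_i(a) - λ_{i+1}(a)) α(i) + λ_n(a) α(n)`. -/
noncomputable def choquetTrace {n : ℕ} (α : ℕ → ℝ) (a : Matrix (Fin n) (Fin n) ℂ)
    (ha : a.IsHermitian) : ℝ :=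
  ∑ i ∈ Finset.range n, (eigN a ha i - eigN a ha (i + 1)) * α (i + 1)

/-- Functional calculus of a Hermitian matrix `a` by a function `f : ℝ → ℝ` on its eigenvalues. -/
noncomputable def funCalc {n : ℕ} (f : ℝ → ℝ) (a : Matrix (Fin n) (Fin n) ℂ)
    (ha : a.IsHermitian) : Matrix (Fin n) (Fin n) ℂ :=
  (ha.eigenvectorUnitary : Matrix (Fin n) (Fin n) ℂ) *
    Matrix.diagonal (fun i => (f (ha.eigenvalues i) : ℂ)) *
    star (ha.eigenvectorUnitary : Matrix (Fin n) (Fin n) ℂ)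

/-- The absolute value `|a| = (a^* a)^{1/2}` of a matrix. -/
noncomputable def matAbs {n : ℕ} (a : Matrix (Fin n) (Fin n) ℂ) : Matrix (Fin n) (Fin n) ℂ :=
  ((Matrix.posSemidef_conjTranspose_mul_self a).1.eigenvectorUnitary : Matrix (Fin n) (Fin n) ℂ) *
    Matrix.diagonal ((↑) ∘ Real.sqrt ∘ (Matrix.posSemidef_conjTranspose_mul_self a).1.eigenvalues) *
    star ((Matrix.posSemidef_conjTranspose_mul_self a).1.eigenvectorUnitary : Matrix (Fin n) (Fin n) ℂ)

theorem matAbs_isHermitian {n : ℕ} (a : Matrix (Fin n) (Fin n) ℂ) : (matAbs a).IsHermitian :=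
  by
  unfold matAbs
  rw [Matrix.star_eq_conjTranspose]
  exact Matrix.isHermitian_mul_mul_conjTranspose _
    (Matrix.isHermitian_diagonal_of_self_adjoint _ (by ext i; simp))

/-!
For `(2) ⇒ (1)`, a Courant–Fischer dimension count: the span of the eigenvectors of `a` for its
`i + 1` largest eigenvalues and the preimage under `c*` of the span of the eigenvectors of `b` for
its `n - i` smallest eigenvalues have dimensions adding up to more than `n`, so they share some
`x ≠ 0`, and then `λᵢ(a) ‖x‖² ≤ ⟪x, a x⟫ = ⟪c* x, b c* x⟫ ≤ λᵢ(b) ‖c* x‖² ≤ λᵢ(b) ‖x‖²`.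

For `(1) ⇒ (2)`, diagonalize `a = Vₐ Dₐ Vₐ*` and `b = V_b D_b V_b*` with the eigenvalues in
decreasing order; then `c = Vₐ D V_b*` with `D = diag (√(λᵢ(a) / λᵢ(b)))` is a contraction with
`c b c* = a` (where `λᵢ(b) = 0`, also `λᵢ(a) = 0`, and the junk value `√(0 / 0) = 0` is harmless).
-/

open scoped InnerProductSpace

theorem LinearIndependent.finrank_span_image_finset {R M ι : Type*} [DivisionRing R]
    [AddCommGroup M] [Module R M] {v : ι → M} (hv : LinearIndependent R v) (s : Finset ι) :
    Module.finrank R (Submodule.span R (v '' s)) = s.card := by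
  rw [Set.image_eq_range]
  exact (finrank_span_eq_card (hv.comp _ Subtype.val_injective)).trans (Fintype.card_coe s)

section FiniteDimensional

variable {K V V₂ : Type*} [DivisionRing K] [AddCommGroup V] [Module K V] [FiniteDimensional K V]
  [AddCommGroup V₂] [Module K V₂] [FiniteDimensional K V₂]

theorem Submodule.finrank_add_finrank_le_finrank_comap_add (f : V →ₗ[K] V₂) (W : Submodule K V₂) :
    Module.finrank K W + Module.finrank K V ≤
      Module.finrank K (W.comap f) + Module.finrank K V₂ := by
  have hrank := LinearMap.finrank_range_add_finrank_ker (W.mkQ ∘ₗ f)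
  have hrange := (LinearMap.range (W.mkQ ∘ₗ f)).finrank_le
  have hquot := W.finrank_quotient_add_finrank
  rw [LinearMap.ker_comp, Submodule.ker_mkQ] at hrank
  omega

theorem Submodule.exists_mem_inf_ne_zero_of_finrank_lt {U W : Submodule K V}
    (h : Module.finrank K V < Module.finrank K U + Module.finrank K W) :
    ∃ x ∈ U ⊓ W, x ≠ 0 := by
  by_contra! hx
  refine h.not_ge (Submodule.finrank_add_finrank_le_of_disjoint (Submodule.disjoint_def.2 ?_))
  exact fun x hxU hxW => hx x ⟨hxU, hxW⟩

end FiniteDimensional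

namespace OrthonormalBasis

variable {𝕜 E ι : Type*} [RCLike 𝕜] [NormedAddCommGroup E] [InnerProductSpace 𝕜 E] [Fintype ι]
  (e : OrthonormalBasis ι 𝕜 E) {T : E →ₗ[𝕜] E} {μ : ι → ℝ}

theorem re_inner_map_self_eq_sum (he : ∀ j, T (e j) = (μ j : 𝕜) • e j) (x : E) :
    RCLike.re ⟪x, T x⟫_𝕜 = ∑ j, μ j * ‖e.repr x j‖ ^ 2 := by
  have hTx : T x = ∑ j, (e.repr x j * μ j) • e j := by
    conv_lhs => rw [← e.sum_repr x]
    simp only [map_sum, map_smul, he, smul_smul]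
  rw [hTx, inner_sum, map_sum]
  refine Finset.sum_congr rfl fun j _ => ?_
  rw [inner_smul_right, ← inner_conj_symm, ← e.repr_apply_apply, mul_right_comm,
    RCLike.mul_conj]
  norm_cast
  ring

theorem sum_sq_norm_repr (x : E) : ∑ j, ‖e.repr x j‖ ^ 2 = ‖x‖ ^ 2 := by
  simp only [e.repr_apply_apply, e.sum_sq_norm_inner_right]

theorem repr_eq_zero_of_mem_span {s : Set ι} {x : E} (hx : x ∈ Submodule.span 𝕜 (e '' s))
    {j : ι} (hj : j ∉ s) : e.repr x j = 0 := by
  rw [← e.coe_toBasis, e.toBasis.mem_span_image] at hx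
  rw [← e.coe_toBasis_repr_apply]
  exact Finsupp.notMem_support_iff.1 fun h => hj (hx h)

variable {e}

theorem re_inner_map_self_le (he : ∀ j, T (e j) = (μ j : 𝕜) • e j) {s : Set ι} {m : ℝ}
    (hm : ∀ j ∈ s, μ j ≤ m) {x : E} (hx : x ∈ Submodule.span 𝕜 (e '' s)) :
    RCLike.re ⟪x, T x⟫_𝕜 ≤ m * ‖x‖ ^ 2 := by
  rw [e.re_inner_map_self_eq_sum he, ← e.sum_sq_norm_repr, Finset.mul_sum]
  refine Finset.sum_le_sum fun j _ => ?_
  by_cases hj : j ∈ s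
  · exact mul_le_mul_of_nonneg_right (hm j hj) (sq_nonneg _)
  · simp [e.repr_eq_zero_of_mem_span hx hj]

theorem le_re_inner_map_self (he : ∀ j, T (e j) = (μ j : 𝕜) • e j) {s : Set ι} {m : ℝ}
    (hm : ∀ j ∈ s, m ≤ μ j) {x : E} (hx : x ∈ Submodule.span 𝕜 (e '' s)) :
    m * ‖x‖ ^ 2 ≤ RCLike.re ⟪x, T x⟫_𝕜 := by
  rw [e.re_inner_map_self_eq_sum he, ← e.sum_sq_norm_repr, Finset.mul_sum]
  refine Finset.sum_le_sum fun j _ => ?_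
  by_cases hj : j ∈ s
  · exact mul_le_mul_of_nonneg_right (hm j hj) (sq_nonneg _)
  · simp [e.repr_eq_zero_of_mem_span hx hj]

end OrthonormalBasis

theorem Matrix.IsHermitian.toEuclideanLin_eigenvectorBasis {𝕜 ι : Type*} [RCLike 𝕜] [Fintype ι]
    [DecidableEq ι] {A : Matrix ι ι 𝕜} (hA : A.IsHermitian) (j : ι) :
    A.toEuclideanLin (hA.eigenvectorBasis j) = (hA.eigenvalues j : 𝕜) • hA.eigenvectorBasis j := by
  ext1
  simp only [Matrix.toLpLin_apply, hA.mulVec_eigenvectorBasis, PiLp.smul_apply,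
    Pi.smul_apply, RCLike.real_smul_eq_coe_smul (K := 𝕜)]

theorem Real.sq_sqrt_div_mul_of_le {x y : ℝ} (hx : 0 ≤ x) (hxy : x ≤ y) : √(x / y) ^ 2 * y = x := by
  rcases (hx.trans hxy).eq_or_lt with rfl | hy
  · simp [le_antisymm hxy hx]
  · rw [Real.sq_sqrt (div_nonneg hx hy.le), div_mul_cancel₀ x hy.ne']

section EigDesc

variable {n : ℕ}

-- `eigDesc A hA i = hA.eigenvalues (eigDescPerm hA i)` holds by `rfl`.
noncomputable def eigDescPerm {A : Matrix (Fin n) (Fin n) ℂ} (hA : A.IsHermitian) :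
    Equiv.Perm (Fin n) :=
  Fin.revPerm.trans (Tuple.sort hA.eigenvalues)

theorem eigDesc_antitone {A : Matrix (Fin n) (Fin n) ℂ} (hA : A.IsHermitian) :
    Antitone (eigDesc A hA) :=
  fun _ _ hij => Tuple.monotone_sort _ (Fin.rev_le_rev.2 hij)

theorem eigDesc_nonneg {A : Matrix (Fin n) (Fin n) ℂ} (hA : A.PosSemidef) (i : Fin n) :
    0 ≤ eigDesc A hA.1 i :=
  hA.eigenvalues_nonneg _

noncomputable def topEigenspan {A : Matrix (Fin n) (Fin n) ℂ} (hA : A.IsHermitian) (i : Fin n) :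
    Submodule ℂ (EuclideanSpace ℂ (Fin n)) :=
  Submodule.span ℂ (hA.eigenvectorBasis '' ((Finset.Iic i).map (eigDescPerm hA).toEmbedding))

noncomputable def bottomEigenspan {A : Matrix (Fin n) (Fin n) ℂ} (hA : A.IsHermitian)
    (i : Fin n) : Submodule ℂ (EuclideanSpace ℂ (Fin n)) :=
  Submodule.span ℂ (hA.eigenvectorBasis '' ((Finset.Ici i).map (eigDescPerm hA).toEmbedding))

theorem finrank_topEigenspan {A : Matrix (Fin n) (Fin n) ℂ} (hA : A.IsHermitian) (i : Fin n) :
    Module.finrank ℂ (topEigenspan hA i) = i + 1 := by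
  rw [topEigenspan, hA.eigenvectorBasis.orthonormal.linearIndependent.finrank_span_image_finset,
    Finset.card_map, Fin.card_Iic]

theorem finrank_bottomEigenspan {A : Matrix (Fin n) (Fin n) ℂ} (hA : A.IsHermitian)
    (i : Fin n) : Module.finrank ℂ (bottomEigenspan hA i) = n - i := by
  rw [bottomEigenspan,
    hA.eigenvectorBasis.orthonormal.linearIndependent.finrank_span_image_finset,
    Finset.card_map, Fin.card_Ici]

theorem eigDesc_mul_norm_sq_le_of_mem_topEigenspan {A : Matrix (Fin n) (Fin n) ℂ}
    (hA : A.IsHermitian) {i : Fin n} {x : EuclideanSpace ℂ (Fin n)}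
    (hx : x ∈ topEigenspan hA i) :
    eigDesc A hA i * ‖x‖ ^ 2 ≤ RCLike.re ⟪x, toEuclideanCLM (𝕜 := ℂ) A x⟫_ℂ := by
  refine OrthonormalBasis.le_re_inner_map_self (T := (toEuclideanCLM (𝕜 := ℂ) A).toLinearMap)
    hA.toEuclideanLin_eigenvectorBasis (fun j hj => ?_) hx
  obtain ⟨k, hk, rfl⟩ := Finset.mem_map.1 hj
  exact eigDesc_antitone hA (Finset.mem_Iic.1 hk)

theorem re_inner_le_eigDesc_mul_norm_sq_of_mem_bottomEigenspan {A : Matrix (Fin n) (Fin n) ℂ}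
    (hA : A.IsHermitian) {i : Fin n} {x : EuclideanSpace ℂ (Fin n)}
    (hx : x ∈ bottomEigenspan hA i) :
    RCLike.re ⟪x, toEuclideanCLM (𝕜 := ℂ) A x⟫_ℂ ≤ eigDesc A hA i * ‖x‖ ^ 2 := by
  refine OrthonormalBasis.re_inner_map_self_le (T := (toEuclideanCLM (𝕜 := ℂ) A).toLinearMap)
    hA.toEuclideanLin_eigenvectorBasis (fun j hj => ?_) hx
  obtain ⟨k, hk, rfl⟩ := Finset.mem_map.1 hj
  exact eigDesc_antitone hA (Finset.mem_Ici.1 hk)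

theorem eigDesc_le_of_eq_mul_mul_star {a b c : Matrix (Fin n) (Fin n) ℂ} (ha : a.IsHermitian)
    (hb : b.PosSemidef) (hc : ‖toEuclideanCLM (𝕜 := ℂ) c‖ ≤ 1) (habc : a = c * b * star c)
    (i : Fin n) : eigDesc a ha i ≤ eigDesc b hb.1 i := by
  set C := toEuclideanCLM (𝕜 := ℂ) c
  obtain ⟨x, ⟨hxa, hxb⟩, hx0⟩ :
      ∃ x ∈ topEigenspan ha i ⊓ (bottomEigenspan hb.1 i).comap (star C).toLinearMap, x ≠ 0 := by
    apply Submodule.exists_mem_inf_ne_zero_of_finrank_lt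
    have hcomap := (bottomEigenspan hb.1 i).finrank_add_finrank_le_finrank_comap_add
      (star C).toLinearMap
    rw [finrank_bottomEigenspan, finrank_euclideanSpace_fin] at hcomap
    rw [finrank_topEigenspan, finrank_euclideanSpace_fin]
    omega
  set B := toEuclideanCLM (𝕜 := ℂ) b
  have hinner : ⟪x, toEuclideanCLM (𝕜 := ℂ) a x⟫_ℂ = ⟪star C x, B (star C x)⟫_ℂ := by
    rw [habc, map_mul, map_mul, map_star, ContinuousLinearMap.star_eq_adjoint,
      ContinuousLinearMap.adjoint_inner_left]
    rfl
  have hCx : ‖star C x‖ ≤ ‖x‖ := by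
    have hC : ‖star C‖ ≤ 1 := by
      rwa [ContinuousLinearMap.star_eq_adjoint, LinearIsometryEquiv.norm_map]
    simpa using (star C).le_of_opNorm_le hC x
  have hx : 0 < ‖x‖ ^ 2 := by positivity
  have hb0 := eigDesc_nonneg hb i
  refine le_of_mul_le_mul_right ?_ hx
  calc eigDesc a ha i * ‖x‖ ^ 2 ≤ RCLike.re ⟪star C x, B (star C x)⟫_ℂ :=
        hinner ▸ eigDesc_mul_norm_sq_le_of_mem_topEigenspan ha hxa
    _ ≤ eigDesc b hb.1 i * ‖star C x‖ ^ 2 :=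
        re_inner_le_eigDesc_mul_norm_sq_of_mem_bottomEigenspan hb.1 hxb
    _ ≤ eigDesc b hb.1 i * ‖x‖ ^ 2 := by gcongr

theorem Matrix.IsHermitian.exists_mem_unitaryGroup_eq_diagonal_eigDesc
    {A : Matrix (Fin n) (Fin n) ℂ} (hA : A.IsHermitian) :
    ∃ V ∈ unitaryGroup (Fin n) ℂ, A = V * diagonal (fun i => (eigDesc A hA i : ℂ)) * star V := by
  set σ := eigDescPerm hA
  refine ⟨(hA.eigenvectorUnitary : Matrix (Fin n) (Fin n) ℂ).submatrix id σ, ?_, ?_⟩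
  · rw [mem_unitaryGroup_iff, star_eq_conjTranspose, conjTranspose_submatrix, submatrix_mul_equiv,
      ← star_eq_conjTranspose, Unitary.mul_star_self_of_mem hA.eigenvectorUnitary.2,
      submatrix_id_id]
  · have hdiag : diagonal (fun i => (eigDesc A hA i : ℂ)) =
        (diagonal (RCLike.ofReal ∘ hA.eigenvalues)).submatrix σ σ := by
      rw [submatrix_diagonal_equiv]; rfl
    rw [hdiag, star_eq_conjTranspose, conjTranspose_submatrix, submatrix_mul_equiv,
      submatrix_mul_equiv, submatrix_id_id, ← star_eq_conjTranspose]
    exact hA.spectral_theorem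

open scoped Matrix.Norms.L2Operator in
theorem exists_contraction_eq_mul_mul_star_of_eigDesc_le {a b : Matrix (Fin n) (Fin n) ℂ}
    (ha : a.PosSemidef) (hb : b.PosSemidef) (h : ∀ i, eigDesc a ha.1 i ≤ eigDesc b hb.1 i) :
    ∃ c : Matrix (Fin n) (Fin n) ℂ, ‖toEuclideanCLM (𝕜 := ℂ) c‖ ≤ 1 ∧ a = c * b * star c := by
  obtain ⟨Va, hVa, ha_eq⟩ := ha.1.exists_mem_unitaryGroup_eq_diagonal_eigDesc
  obtain ⟨Vb, hVb, hb_eq⟩ := hb.1.exists_mem_unitaryGroup_eq_diagonal_eigDesc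
  set d : Fin n → ℝ := fun i => √(eigDesc a ha.1 i / eigDesc b hb.1 i)
  have hd : ∀ i, d i ≤ 1 := fun i =>
    Real.sqrt_le_one.2 (div_le_one_of_le₀ (h i) (eigDesc_nonneg hb i))
  have hdiag : diagonal (fun i => (d i : ℂ)) * diagonal (fun i => (eigDesc b hb.1 i : ℂ)) *
      star (diagonal (fun i => (d i : ℂ))) = diagonal (fun i => (eigDesc a ha.1 i : ℂ)) := by
    rw [star_eq_conjTranspose, diagonal_conjTranspose, diagonal_mul_diagonal,
      diagonal_mul_diagonal]
    congr 1
    funext i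
    simp only [Pi.star_apply, RCLike.star_def, Complex.conj_ofReal]
    rw [← Real.sq_sqrt_div_mul_of_le (eigDesc_nonneg ha i) (h i)]
    push_cast
    ring
  refine ⟨Va * diagonal (fun i => (d i : ℂ)) * star Vb, ?_, ?_⟩
  · rw [← cstar_norm_def, CStarRing.norm_mul_mem_unitary _ (Unitary.star_mem hVb),
      CStarRing.norm_mem_unitary_mul _ hVa, l2_opNorm_diagonal]
    refine (pi_norm_le_iff_of_nonneg zero_le_one).2 fun i => ?_
    rw [Complex.norm_real, Real.norm_of_nonneg (Real.sqrt_nonneg _)]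
    exact hd i
  · have hVb_cancel : ∀ X, star Vb * (Vb * X) = X := fun X => by
      rw [← Matrix.mul_assoc, Unitary.star_mul_self_of_mem hVb, Matrix.one_mul]
    rw [ha_eq, hb_eq, ← hdiag]
    simp only [star_mul, star_star, Matrix.mul_assoc, hVb_cancel]

end EigDesc

/-- `λ_i(a) ≤ λ_i(b)` for all `i` iff `a = c b c^*` for some contraction `c`. -/
theorem stmt6 (n : ℕ) (a b : Matrix (Fin n) (Fin n) ℂ) (ha : a.PosSemidef) (hb : b.PosSemidef) :
    (∀ i : Fin n, eigDesc a ha.1 i ≤ eigDesc b hb.1 i) ↔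
      ∃ c : Matrix (Fin n) (Fin n) ℂ,
        ‖Matrix.toEuclideanCLM (𝕜 := ℂ) c‖ ≤ 1 ∧ a = c * b * star c :=
  ⟨exists_contraction_eq_mul_mul_star_of_eigDesc_le ha hb,
    fun ⟨_, hc, habc⟩ => eigDesc_le_of_eq_mul_mul_star ha.1 hb hc habc⟩
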